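/- arXiv:1707.07170 — 5 statements merged into one kernel-verified Lean document; each statement's English description precedes it below -/
import Mathlib

section
/- Let n ≥ 9 and let F be a finite simple graph such that F has no cycle whose length lies in {⌈(n−1)/2⌉, ..., n−1}, and every pair of vertices of F has at least one common neighbor. Then F has no cycle of length greater than ⌈(n−1)/2⌉ − 1. -/
/-!
Among the cycles of length at least `n / 2` take a shortest one, `C`, of length `L`. Since no cycle
has length in `[n / 2, n - 1]`, `L ≥ n`. A chord of `C` would split it into two shorter cycles
whose lengths add up to `L + 2`; both would be shorter than `n / 2`, forcing `L < n`. So `C` is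
chordless. Now let `v` be a vertex of `C` and `x` the vertex at distance `d = n / 2 - 1` from `v`
along `C`, and let `w` be a common neighbour of `v` and `x`. As `C` is chordless and
`3 ≤ d ≤ L - 3`, `w` is not on `C`; then `w` together with the arc of `C` from `v` to `x` is a
cycle of length `d + 2 = n / 2 + 1 ∈ [n / 2, n - 1]`, a contradiction.
-/

namespace SimpleGraph

variable {V : Type*} {G : SimpleGraph V} {u v w x : V}

namespace Walk

lemma IsPath.mk_notMem_edges {p : G.Walk u v} (hp : p.IsPath) (hl : 2 ≤ p.length) :
    s(u, v) ∉ p.edges := fun h => by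
  have := hp.length_eq_one_of_mem_edges h
  omega

lemma IsCycle.exists_isCycle_of_adj_getVert {c : G.Walk u u} (hc : c.IsCycle) {j : ℕ}
    (hj : 2 ≤ j) (hjc : j + 2 ≤ c.length) (hadj : G.Adj u (c.getVert j)) :
    (∃ c₁ : G.Walk u u, c₁.IsCycle ∧ c₁.length = j + 1) ∧
      ∃ c₂ : G.Walk u u, c₂.IsCycle ∧ c₂.length = c.length - j + 1 := by
  have htake : (c.take j).IsPath := hc.isPath_take (by omega)
  have hdrop : (c.drop j).IsPath := hc.isPath_drop (by omega)
  have htake_len : (c.take j).length = j := by rw [take_length]; omega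
  refine ⟨⟨cons hadj (c.take j).reverse, ?_, by simp [htake_len]⟩,
    ⟨cons hadj (c.drop j), ?_, by simp [drop_length]⟩⟩
  · rw [cons_isCycle_iff, edges_reverse, List.mem_reverse]
    exact ⟨htake.reverse, htake.mk_notMem_edges (by omega)⟩
  · rw [cons_isCycle_iff, Sym2.eq_swap]
    exact ⟨hdrop, hdrop.mk_notMem_edges (by rw [drop_length]; omega)⟩

lemma IsCycle.exists_isCycle_of_adj_of_mem_support {c : G.Walk u u} (hc : c.IsCycle)
    (hv : v ∈ c.support) (hadj : G.Adj u v) (hnotin : s(u, v) ∉ c.edges) :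
    ∃ j, 2 ≤ j ∧ j + 2 ≤ c.length ∧
      (∃ c₁ : G.Walk u u, c₁.IsCycle ∧ c₁.length = j + 1) ∧
      ∃ c₂ : G.Walk u u, c₂.IsCycle ∧ c₂.length = c.length - j + 1 := by
  obtain ⟨j, rfl, hj⟩ := mem_support_iff_exists_getVert.mp hv
  have hj0 : j ≠ 0 := by rintro rfl; exact hadj.ne (getVert_zero c).symm
  have hjL : j ≠ c.length := by rintro rfl; exact hadj.ne (getVert_length c).symm
  have hj1 : j ≠ 1 := by
    rintro rfl
    exact hnotin ((mk_mem_edges_iff_exists c).mpr ⟨0, by omega, by simp⟩)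
  have hjL1 : j ≠ c.length - 1 := by
    rintro rfl
    refine hnotin ((mk_mem_edges_iff_exists c).mpr ⟨c.length - 1, by omega, ?_⟩)
    rw [Nat.sub_add_cancel (by omega), getVert_length, Sym2.eq_swap]
  exact ⟨j, by omega, by omega, hc.exists_isCycle_of_adj_getVert (by omega) (by omega) hadj⟩

lemma IsCycle.exists_isCycle_of_not_isChordless {c : G.Walk u u} (hc : c.IsCycle)
    (hch : ¬ c.IsChordless) : ∃ j, 2 ≤ j ∧ j + 2 ≤ c.length ∧
      (∃ (v : V) (c₁ : G.Walk v v), c₁.IsCycle ∧ c₁.length = j + 1) ∧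
      ∃ (v : V) (c₂ : G.Walk v v), c₂.IsCycle ∧ c₂.length = c.length - j + 1 := by
  classical
  simp only [isChordless_iff_forall_mem_edges, not_forall] at hch
  obtain ⟨a, b, ha, hb, hab, hnotin⟩ := hch
  obtain ⟨j, hj2, hjc, ⟨c₁, h₁⟩, ⟨c₂, h₂⟩⟩ := (hc.rotate ha).exists_isCycle_of_adj_of_mem_support
    ((mem_support_rotate_iff c a ha).mpr hb) hab
    (fun h => hnotin ((rotate_edges c a ha).perm.mem_iff.mp h))
  rw [length_rotate] at hjc h₂
  exact ⟨j, hj2, hjc, ⟨a, c₁, h₁⟩, ⟨a, c₂, h₂⟩⟩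

lemma IsCycle.eq_add_one_or_of_adj_getVert {c : G.Walk u u} (hc : c.IsCycle) (hch : c.IsChordless)
    {i j : ℕ} (hij : i < j) (hj : j < c.length) (hadj : G.Adj (c.getVert i) (c.getVert j)) :
    j = i + 1 ∨ (i = 0 ∧ j = c.length - 1) := by
  obtain ⟨k, hk, hkij⟩ := (mk_mem_edges_iff_exists c).mp
    (hch.mem_edges (c.getVert_mem_support i) (c.getVert_mem_support j) hadj)
  have hinj {a b : ℕ} (ha : a < c.length) (hb : b < c.length) (h : c.getVert a = c.getVert b) :
      a = b := hc.getVert_injOn' (by simp; omega) (by simp; omega) h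
  have hstart {a : ℕ} (ha : a < c.length) (h : c.getVert a = u) : a = 0 := by
    have := (hc.getVert_endpoint_iff ha.le).mp h
    omega
  rcases Sym2.eq_iff.mp hkij with ⟨hki, hkj⟩ | ⟨hkj, hki⟩
  · obtain rfl := hinj hk (by omega) hki
    by_cases hk1 : k + 1 < c.length
    · exact .inl (hinj hj hk1 hkj.symm)
    · rw [show k + 1 = c.length by omega, getVert_length] at hkj
      exact absurd (hstart hj hkj.symm) (by omega)
  · obtain rfl := hinj hk hj hkj
    by_cases hk1 : k + 1 < c.length
    · exact absurd (hinj hk1 (by omega) hki) (by omega)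
    · rw [show k + 1 = c.length by omega, getVert_length] at hki
      exact .inr ⟨hstart (by omega) hki.symm, by omega⟩

lemma IsCycle.not_adj_of_mem_support_of_adj {c : G.Walk u u} (hc : c.IsCycle)
    (hch : c.IsChordless) {d : ℕ} (hd : 3 ≤ d) (hdc : d + 3 ≤ c.length) (hw : w ∈ c.support)
    (huw : G.Adj u w) : ¬ G.Adj w (c.getVert d) := by
  obtain ⟨k, rfl, hk⟩ := mem_support_iff_exists_getVert.mp hw
  rcases hk.eq_or_lt with rfl | hkc
  · rw [getVert_length] at huw
    exact absurd huw G.irrefl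
  have hk0 : k ≠ 0 := by rintro rfl; exact huw.ne (getVert_zero c).symm
  rcases hc.eq_add_one_or_of_adj_getVert hch (i := 0) (by omega) hkc (by simpa using huw)
    with rfl | ⟨-, rfl⟩
  · intro h
    have := hc.eq_add_one_or_of_adj_getVert hch (by omega) (by omega) h
    omega
  · intro h
    have := hc.eq_add_one_or_of_adj_getVert hch (by omega) (by omega) h.symm
    omega

lemma IsPath.exists_isCycle_of_adj_of_notMem {p : G.Walk u x} (hp : p.IsPath) (hux : u ≠ x)
    (hw : w ∉ p.support) (huw : G.Adj u w) (hxw : G.Adj x w) :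
    ∃ c : G.Walk u u, c.IsCycle ∧ c.length = p.length + 2 := by
  refine ⟨cons huw (cons hxw.symm p.reverse), ?_, by simp⟩
  rw [cons_isCycle_iff, cons_isPath_iff, edges_cons, List.mem_cons, edges_reverse, List.mem_reverse,
    support_reverse, List.mem_reverse]
  refine ⟨⟨hp.reverse, hw⟩, ?_⟩
  rintro (h | h)
  · rcases Sym2.eq_iff.mp h with ⟨h, -⟩ | ⟨h, -⟩
    · exact huw.ne h
    · exact hux h
  · exact hw (p.snd_mem_support_of_mem_edges h)

end Walk

open Walk

lemma exists_isChordless_isCycle_of_gap {m M : ℕ} (hmM : 2 * m ≤ M + 4)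
    (hgap : ∀ (v : V) (c : G.Walk v v), c.IsCycle → ¬ (m ≤ c.length ∧ c.length ≤ M))
    {c : G.Walk u u} (hc : c.IsCycle) (hm : m ≤ c.length) :
    ∃ (v : V) (c' : G.Walk v v), c'.IsCycle ∧ c'.IsChordless ∧ M < c'.length := by
  induction h : c.length using Nat.strong_induction_on generalizing u c with
  | _ L ih =>
  have hML : M < L := by have := hgap u c hc; omega
  by_cases hch : c.IsChordless
  · exact ⟨u, c, hc, hch, h ▸ hML⟩
  obtain ⟨j, hj2, hjc, ⟨v₁, c₁, hc₁, hl₁⟩, ⟨v₂, c₂, hc₂, hl₂⟩⟩ :=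
    hc.exists_isCycle_of_not_isChordless hch
  by_cases hm₁ : m ≤ c₁.length
  · exact ih _ (by omega) hc₁ hm₁ rfl
  by_cases hm₂ : m ≤ c₂.length
  · exact ih _ (by omega) hc₂ hm₂ rfl
  -- the two halves have lengths adding up to `L + 2`, so now `L + 2 ≤ 2 * (m - 1)`
  omega

end SimpleGraph

open SimpleGraph Walk in
theorem stmt3_general (n : ℕ) (hn : 9 ≤ n) {V : Type*} (F : SimpleGraph V)
    (hcyc : ∀ (v : V) (c : F.Walk v v), c.IsCycle →
      ¬ (n / 2 ≤ c.length ∧ c.length ≤ n - 1))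
    (hcodeg : ∀ u v : V, u ≠ v → ∃ w : V, F.Adj u w ∧ F.Adj v w) :
    ∀ (v : V) (c : F.Walk v v), c.IsCycle → c.length ≤ n / 2 - 1 := by
  intro v₀ c₀ hc₀
  by_contra! hlong
  obtain ⟨v, c, hc, hch, hlen⟩ :=
    exists_isChordless_isCycle_of_gap (m := n / 2) (M := n - 1) (by omega) hcyc hc₀ (by omega)
  set d := n / 2 - 1
  have hvx : v ≠ c.getVert d := fun h => by
    have := (hc.getVert_endpoint_iff (by omega)).mp h.symm
    omega
  obtain ⟨w, hvw, hxw⟩ := hcodeg v (c.getVert d) hvx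
  have hw : w ∉ c.support := fun hw =>
    hc.not_adj_of_mem_support_of_adj hch (by omega) (by omega) hw hvw hxw.symm
  obtain ⟨c', hc', hlen'⟩ := (hc.isPath_take (n := d) (by omega)).exists_isCycle_of_adj_of_notMem
    hvx (fun h => hw ((c.isSubwalk_take d).support_subset h)) hvw hxw
  rw [take_length] at hlen'
  exact hcyc v c' hc' (by omega)

/-- If `n ≥ 9` and a finite simple graph `F` has no cycle whose length lies in
`{⌈(n-1)/2⌉, …, n-1}` while every pair of distinct vertices has a common
neighbor, then `F` has no cycle of length greater than `⌈(n-1)/2⌉ - 1`.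
(Here `⌈(n-1)/2⌉ = n / 2` for natural `n ≥ 1`.) -/
theorem stmt3 (n : ℕ) (hn : 9 ≤ n) {V : Type*} [Fintype V] (F : SimpleGraph V)
    (hcyc : ∀ (v : V) (c : F.Walk v v), c.IsCycle →
      ¬ (n / 2 ≤ c.length ∧ c.length ≤ n - 1))
    (hcodeg : ∀ u v : V, u ≠ v → ∃ w : V, F.Adj u w ∧ F.Adj v w) :
    ∀ (v : V) (c : F.Walk v v), c.IsCycle → c.length ≤ n / 2 - 1 :=
  stmt3_general n hn F hcyc hcodeg
end

section
/- Let F be a finite simple graph on n vertices with no cycle of length longer than ⌈n/2⌉ − 1, in which every vertex has degree at least ⌈(n−1)/3⌉ ≥ 2, every pair of vertices has at least one common neighbor, and no maximum-length path forms a cycle. If v_1 v_2 ... v_ℓ is a path of maximum length in F, then v_1 and v_ℓ have exactly one common neighbor v_c on this path, and moreover N(v_1) ⊆ {v_2,...,v_c} and N(v_ℓ) ⊆ {v_c,...,v_{ℓ−1}}. -/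
/-!
Write the longest path as `u = v₀, v₁, …, v_m = v` and let `K` bound the cycle lengths. Every
neighbour of `u` or `v` lies on the path. If `u ∼ v_{k+1}`, the Pósa rotation
`v_k ⋯ v₀ v_{k+1} ⋯ v_m` is again a longest path, so `v ≁ v_k`; hence `deg u + deg v ≤ m`.
If the chords cross, `v ∼ v_i` and `u ∼ v_j` with `i < j`, then every neighbour `v_k` of `u`
with `k > i` closes the two cycles `u v₁ ⋯ v_k u` and `u v_k ⋯ v_m v_i ⋯ v₁ u`, which confine
`k` to an interval of `2K - m - 2 - i` integers; hence `deg u + m + 2 ≤ 2K`. Together with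
`3δ ≥ n - 1 ≥ 2K` this is impossible, so all neighbours of `u` precede all neighbours of `v`,
and a common neighbour separates the two.
-/

open Finset

theorem List.Nodup.take_append_drop_of_le {α : Type*} {l : List α} (hl : l.Nodup) {i j : ℕ}
    (h : i ≤ j) : (l.take i ++ l.drop j).Nodup :=
  ((l.drop_sublist_drop_left h).append_left _).nodup (by rwa [List.take_append_drop])

theorem Set.ncard_le_card_of_subset_image {α β : Type*} {t : Set β} (f : α → β)
    (s : Finset α) (h : t ⊆ f '' s) : t.ncard ≤ #s :=
  (Set.ncard_le_ncard h (s.finite_toSet.image f)).trans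
    ((Set.ncard_image_le s.finite_toSet).trans (Set.ncard_coe_finset s).le)

namespace SimpleGraph.Walk

variable {V : Type*} {G : SimpleGraph V} {u v w : V}

lemma getVert_mem_drop_one_take_support (p : G.Walk u v) {i k : ℕ} (hk : k < i)
    (hip : i ≤ p.length) : p.getVert (k + 1) ∈ (p.support.take (i + 1)).drop 1 := by
  refine List.mem_iff_getElem.mpr ⟨k, ?_, ?_⟩
  · simp only [List.drop_one, List.length_tail, List.length_take, length_support]
    omega
  · simp [getVert_eq_support_getElem p (hk.trans_le hip)]

lemma getVert_mem_dropLast_drop_support (p : G.Walk u v) {i k : ℕ} (hik : i ≤ k)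
    (hkp : k < p.length) : p.getVert k ∈ (p.support.drop i).dropLast := by
  refine List.mem_iff_getElem.mpr ⟨k - i, ?_, ?_⟩
  · simp only [List.length_dropLast, List.length_drop, length_support]
    omega
  · simp [getVert_eq_support_getElem p hkp.le, Nat.add_sub_cancel' hik]

lemma IsPath.cons_isCycle_of_two_le_length {p : G.Walk v u} (hp : p.IsPath) (h : G.Adj u v)
    (hlen : 2 ≤ p.length) : (cons h p).IsCycle :=
  (cons_isCycle_iff p h).mpr ⟨hp, fun he => by
    have := hp.length_eq_one_of_mem_edges (Sym2.eq_swap ▸ he)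
    omega⟩

section CycleBounds

variable {K : ℕ} {p : G.Walk u v}

lemma IsPath.add_one_le_of_adj_getVert
    (hcyc : ∀ (w : V) (c : G.Walk w w), c.IsCycle → c.length ≤ K) (hp : p.IsPath) {k : ℕ}
    (hk : 2 ≤ k) (hkp : k ≤ p.length) (h : G.Adj u (p.getVert k)) : k + 1 ≤ K := by
  have hlen : 2 ≤ (p.take k).reverse.length := by
    simp only [length_reverse, take_length]
    omega
  have := hcyc _ _ ((hp.take k).reverse.cons_isCycle_of_two_le_length h hlen)
  simpa [hkp] using this

lemma IsPath.add_length_sub_add_two_le_of_adj_getVert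
    (hcyc : ∀ (w : V) (c : G.Walk w w), c.IsCycle → c.length ≤ K) (hp : p.IsPath) {i j : ℕ}
    (hi : 1 ≤ i) (hij : i < j) (hjp : j ≤ p.length) (hvi : G.Adj v (p.getVert i))
    (huj : G.Adj u (p.getVert j)) : i + (p.length - j) + 2 ≤ K := by
  set q := (p.take i).append (cons hvi.symm (p.drop j).reverse)
  have hqlen : q.length = i + 1 + (p.length - j) := by
    simp only [q, length_append, take_length, length_cons, length_reverse, drop_length]
    omega
  have hq : q.IsPath := by
    rw [isPath_def, support_append, support_cons, List.tail_cons, support_reverse, support_take,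
      drop_support_eq_support_drop_min, min_eq_left hjp,
      ((List.reverse_perm _).append_left _).nodup_iff]
    exact hp.support_nodup.take_append_drop_of_le (by omega)
  have := hcyc _ _ (hq.cons_isCycle_of_two_le_length huj.symm (by omega))
  rw [length_cons, hqlen] at this
  omega

end CycleBounds

def IsLongestPath (p : G.Walk u v) : Prop :=
  p.IsPath ∧ ∀ ⦃a b : V⦄ (q : G.Walk a b), q.IsPath → q.length ≤ p.length

lemma IsLongestPath.reverse {p : G.Walk u v} (hp : p.IsLongestPath) :
    p.reverse.IsLongestPath :=
  ⟨hp.1.reverse, fun _ _ q hq => (hp.2 q hq).trans_eq p.length_reverse.symm⟩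

def posaRotation (p : G.Walk u v) (k : ℕ) (h : G.Adj u (p.getVert (k + 1))) :
    G.Walk (p.getVert k) v :=
  (p.take k).reverse.append (cons h (p.drop (k + 1)))

lemma IsLongestPath.posaRotation {p : G.Walk u v} (hp : p.IsLongestPath) {k : ℕ}
    (hk : k < p.length) (h : G.Adj u (p.getVert (k + 1))) :
    (p.posaRotation k h).IsLongestPath := by
  have hlen : (p.posaRotation k h).length = p.length := by
    simp only [Walk.posaRotation, length_append, length_reverse, take_length, length_cons,
      drop_length]
    omega
  refine ⟨?_, fun _ _ q hq => hlen ▸ hp.2 q hq⟩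
  rw [isPath_def, Walk.posaRotation, support_append, support_cons, List.tail_cons,
    support_reverse, support_take, drop_support_eq_support_drop_min, min_eq_left hk,
    ((List.reverse_perm _).append_right _).nodup_iff, List.take_append_drop]
  exact hp.1.support_nodup

lemma IsLongestPath.not_adj_getVert_of_adj_getVert_succ
    (hG : ∀ ⦃a b : V⦄ (q : G.Walk a b), q.IsLongestPath → ¬ G.Adj a b) {p : G.Walk u v}
    (hp : p.IsLongestPath) {k : ℕ} (hk : k < p.length) (h : G.Adj u (p.getVert (k + 1))) :
    ¬ G.Adj v (p.getVert k) :=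
  fun h' => hG _ (hp.posaRotation hk h) h'.symm

lemma IsLongestPath.exists_getVert_succ_eq_of_adj_start {p : G.Walk u v}
    (hp : p.IsLongestPath) (h : G.Adj u w) : ∃ k < p.length, p.getVert (k + 1) = w := by
  have hw : w ∈ p.support := by
    by_contra hw
    have := hp.2 _ ((cons_isPath_iff h.symm p).mpr ⟨hp.1, hw⟩)
    simp at this
  obtain ⟨k, rfl, hk⟩ := mem_support_iff_exists_getVert.mp hw
  obtain _ | k := k
  · exact absurd h (by simp)
  · exact ⟨k, hk, rfl⟩

lemma IsLongestPath.exists_getVert_eq_of_adj_end {p : G.Walk u v} (hp : p.IsLongestPath)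
    (h : G.Adj v w) : ∃ k < p.length, p.getVert k = w := by
  obtain ⟨k, hk, rfl⟩ := hp.reverse.exists_getVert_succ_eq_of_adj_start h
  rw [length_reverse] at hk
  exact ⟨p.length - (k + 1), by omega, (getVert_reverse p (k + 1)).symm⟩

lemma IsLongestPath.ncard_neighborSet_start_le [DecidableRel G.Adj] {p : G.Walk u v}
    (hp : p.IsLongestPath) :
    (G.neighborSet u).ncard ≤ #{k ∈ range p.length | G.Adj u (p.getVert (k + 1))} := by
  refine Set.ncard_le_card_of_subset_image (fun k => p.getVert (k + 1)) _ fun w h => ?_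
  obtain ⟨k, hk, rfl⟩ := hp.exists_getVert_succ_eq_of_adj_start h
  exact ⟨k, by simpa [hk] using h, rfl⟩

lemma IsLongestPath.ncard_neighborSet_end_le [DecidableRel G.Adj] {p : G.Walk u v}
    (hp : p.IsLongestPath) :
    (G.neighborSet v).ncard ≤ #{k ∈ range p.length | G.Adj v (p.getVert k)} := by
  refine Set.ncard_le_card_of_subset_image p.getVert _ fun w h => ?_
  obtain ⟨k, hk, rfl⟩ := hp.exists_getVert_eq_of_adj_end h
  exact ⟨k, by simpa [hk] using h, rfl⟩

lemma IsLongestPath.ncard_neighborSet_start_add_ncard_neighborSet_end_le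
    (hG : ∀ ⦃a b : V⦄ (q : G.Walk a b), q.IsLongestPath → ¬ G.Adj a b) {p : G.Walk u v}
    (hp : p.IsLongestPath) :
    (G.neighborSet u).ncard + (G.neighborSet v).ncard ≤ p.length := by
  classical
  have hdisj : Disjoint {k ∈ range p.length | G.Adj u (p.getVert (k + 1))}
      {k ∈ range p.length | G.Adj v (p.getVert k)} :=
    disjoint_filter.mpr fun k hk => hp.not_adj_getVert_of_adj_getVert_succ hG (mem_range.mp hk)
  calc (G.neighborSet u).ncard + (G.neighborSet v).ncard
      ≤ #{k ∈ range p.length | G.Adj u (p.getVert (k + 1))} +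
          #{k ∈ range p.length | G.Adj v (p.getVert k)} :=
        add_le_add hp.ncard_neighborSet_start_le hp.ncard_neighborSet_end_le
    _ = #({k ∈ range p.length | G.Adj u (p.getVert (k + 1))} ∪
          {k ∈ range p.length | G.Adj v (p.getVert k)}) := (card_union_of_disjoint hdisj).symm
    _ ≤ #(range p.length) := card_le_card (union_subset (filter_subset _ _) (filter_subset _ _))
    _ = p.length := card_range _

lemma IsLongestPath.ncard_neighborSet_start_add_length_add_two_le {K : ℕ}
    (hcyc : ∀ (w : V) (c : G.Walk w w), c.IsCycle → c.length ≤ K) {p : G.Walk u v}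
    (hp : p.IsLongestPath) {i j : ℕ} (hi : 1 ≤ i) (hij : i < j) (hjp : j < p.length)
    (hvi : G.Adj v (p.getVert i)) (huj : G.Adj u (p.getVert j)) :
    (G.neighborSet u).ncard + p.length + 2 ≤ 2 * K := by
  classical
  have hsub : {k ∈ range p.length | G.Adj u (p.getVert (k + 1))} ⊆
      range i ∪ Ico (i + p.length + 1 - K) (K - 1) := by
    intro k hk
    obtain ⟨hkp, hadj⟩ := mem_filter.mp hk
    rw [mem_range] at hkp
    rcases lt_or_ge k i with hki | hik
    · exact mem_union_left _ (mem_range.mpr hki)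
    · have := hp.1.add_one_le_of_adj_getVert hcyc (by omega) (by omega) hadj
      have := hp.1.add_length_sub_add_two_le_of_adj_getVert hcyc hi (by omega) (by omega) hvi hadj
      exact mem_union_right _ (mem_Ico.mpr ⟨by omega, by omega⟩)
  have hcard :=
    hp.ncard_neighborSet_start_le.trans ((card_le_card hsub).trans (card_union_le _ _))
  rw [card_range, Nat.card_Ico] at hcard
  -- `j - 1` lies in the second interval, so its length `K - 1 - (i + m + 1 - K)` is not truncated
  have := hp.1.add_one_le_of_adj_getVert hcyc (by omega) hjp.le huj
  have := hp.1.add_length_sub_add_two_le_of_adj_getVert hcyc hi hij hjp.le hvi huj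
  omega

lemma IsLongestPath.le_of_adj_getVert {K δ : ℕ}
    (hcyc : ∀ (w : V) (c : G.Walk w w), c.IsCycle → c.length ≤ K)
    (hG : ∀ ⦃a b : V⦄ (q : G.Walk a b), q.IsLongestPath → ¬ G.Adj a b)
    (hKδ : 2 * K < 3 * δ + 2) {p : G.Walk u v} (hp : p.IsLongestPath)
    (hu : δ ≤ (G.neighborSet u).ncard) (hv : δ ≤ (G.neighborSet v).ncard) ⦃i j : ℕ⦄
    (hjp : j ≤ p.length) (hvi : G.Adj v (p.getVert i)) (huj : G.Adj u (p.getVert j)) :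
    j ≤ i := by
  by_contra! hij
  have hi : i ≠ 0 := by
    rintro rfl
    exact hG p hp (by simpa using hvi.symm)
  have hj : j ≠ p.length := by
    rintro rfl
    exact hG p hp (by simpa using huj)
  have := hp.ncard_neighborSet_start_add_length_add_two_le hcyc (by omega) hij (by omega) hvi huj
  have := hp.ncard_neighborSet_start_add_ncard_neighborSet_end_le hG
  omega

end SimpleGraph.Walk

open SimpleGraph Walk in
theorem stmt4_general {V : Type*} (F : SimpleGraph V) (n : ℕ)
    (hcyc : ∀ (w : V) (c : F.Walk w w), c.IsCycle → c.length ≤ (n + 1) / 2 - 1)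
    (hdeg2 : 2 ≤ (n - 1 + 2) / 3)
    (hdeg : ∀ w : V, (n - 1 + 2) / 3 ≤ (F.neighborSet w).ncard)
    (hcodeg : ∀ a b : V, a ≠ b → ∃ w : V, F.Adj a w ∧ F.Adj b w)
    (hnocycle : ∀ ⦃a b : V⦄ (q : F.Walk a b), q.IsPath →
      (∀ ⦃c d : V⦄ (r : F.Walk c d), r.IsPath → r.length ≤ q.length) → ¬ F.Adj a b)
    {u v : V} (p : F.Walk u v) (hp : p.IsPath)
    (hmax : ∀ ⦃a b : V⦄ (q : F.Walk a b), q.IsPath → q.length ≤ p.length) :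
    ∃ (i : ℕ) (hi : i < p.support.length),
      F.Adj u (p.support.get ⟨i, hi⟩) ∧ F.Adj v (p.support.get ⟨i, hi⟩) ∧
      (∀ w ∈ p.support, F.Adj u w → F.Adj v w → w = p.support.get ⟨i, hi⟩) ∧
      (∀ w : V, F.Adj u w → w ∈ (p.support.take (i + 1)).drop 1) ∧
      (∀ w : V, F.Adj v w → w ∈ (p.support.drop i).dropLast) := by
  have hlong : p.IsLongestPath := ⟨hp, hmax⟩
  have hle := hlong.le_of_adj_getVert hcyc (fun _ _ q hq => hnocycle q hq.1 hq.2)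
    (by omega) (hdeg u) (hdeg v)
  have hu : (F.neighborSet u).ncard ≠ 0 := (Nat.lt_of_lt_of_le (by omega) (hdeg u)).ne'
  obtain ⟨w₁, hw₁⟩ := Set.nonempty_of_ncard_ne_zero hu
  obtain ⟨k₁, hk₁, -⟩ := hlong.exists_getVert_succ_eq_of_adj_start hw₁
  have huv : u ≠ v := by
    rintro rfl
    simp [length_eq_zero_iff.mpr (isPath_iff_nil.mp hp)] at hk₁
  obtain ⟨w₀, hu₀, hv₀⟩ := hcodeg u v huv
  obtain ⟨c, hc, rfl⟩ := hlong.exists_getVert_eq_of_adj_end hv₀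
  have hcs : c < p.support.length := by rw [length_support]; omega
  have hget : p.support.get ⟨c, hcs⟩ = p.getVert c := by
    simp [getVert_eq_support_getElem p hc.le]
  refine ⟨c, hcs, hget ▸ hu₀, hget ▸ hv₀, fun w hw hwu hwv => ?_, fun w hw => ?_,
    fun w hw => ?_⟩
  · obtain ⟨k, rfl, hk⟩ := mem_support_iff_exists_getVert.mp hw
    rw [hget, le_antisymm (hle hk hv₀ hwu) (hle hc.le hwv hu₀)]
  · obtain ⟨k, hk, rfl⟩ := hlong.exists_getVert_succ_eq_of_adj_start hw
    exact p.getVert_mem_drop_one_take_support (hle hk hv₀ hw) hc.le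
  · obtain ⟨k, hk, rfl⟩ := hlong.exists_getVert_eq_of_adj_end hw
    exact p.getVert_mem_dropLast_drop_support (hle hc.le hw hu₀) hk

/-- Let `F` be a graph on `n` vertices with no cycle of length longer than
`⌈n/2⌉ - 1`, minimum degree at least `⌈(n-1)/3⌉ ≥ 2`, every two distinct
vertices having a common neighbor, and such that no maximum-length path has
adjacent endpoints.  If `v_1 … v_ℓ` is a maximum-length path then its endpoints
have exactly one common neighbor `v_c` on the path, `N(v_1) ⊆ {v_2,…,v_c}` and
`N(v_ℓ) ⊆ {v_c,…,v_{ℓ-1}}`.  (Here `⌈n/2⌉ = (n+1)/2` and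
`⌈(n-1)/3⌉ = (n-1+2)/3` as naturals.) -/
theorem stmt4 {V : Type*} [Fintype V] [DecidableEq V] (F : SimpleGraph V) (n : ℕ)
    (hcard : Fintype.card V = n)
    (hcyc : ∀ (w : V) (c : F.Walk w w), c.IsCycle → c.length ≤ (n + 1) / 2 - 1)
    (hdeg2 : 2 ≤ (n - 1 + 2) / 3)
    (hdeg : ∀ w : V, (n - 1 + 2) / 3 ≤ (F.neighborSet w).ncard)
    (hcodeg : ∀ a b : V, a ≠ b → ∃ w : V, F.Adj a w ∧ F.Adj b w)
    (hnocycle : ∀ ⦃a b : V⦄ (q : F.Walk a b), q.IsPath →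
      (∀ ⦃c d : V⦄ (r : F.Walk c d), r.IsPath → r.length ≤ q.length) → ¬ F.Adj a b)
    {u v : V} (p : F.Walk u v) (hp : p.IsPath)
    (hmax : ∀ ⦃a b : V⦄ (q : F.Walk a b), q.IsPath → q.length ≤ p.length) :
    ∃ (i : ℕ) (hi : i < p.support.length),
      F.Adj u (p.support.get ⟨i, hi⟩) ∧ F.Adj v (p.support.get ⟨i, hi⟩) ∧
      (∀ w ∈ p.support, F.Adj u w → F.Adj v w → w = p.support.get ⟨i, hi⟩) ∧
      (∀ w : V, F.Adj u w → w ∈ (p.support.take (i + 1)).drop 1) ∧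
      (∀ w : V, F.Adj v w → w ∈ (p.support.drop i).dropLast) :=
  stmt4_general F n hcyc hdeg2 hdeg hcodeg hnocycle p hp hmax
end

section
/- Let n ≥ 6 and let C̃_n be the cycle on vertices {0,...,n−1} (edges i ~ i+1 for 0 ≤ i ≤ n−2 and n−1 ~ 0) with the additional chord 0 ~ 2. Let S consist of the members of {3,...,n−1} divisible by 3, together with 0 if n−1 is not divisible by 3. Then C̃_n − S has exactly ⌈(n−1)/3⌉ connected components, each a clique of size at most 3. -/
/-! After the deletion every surviving vertex lies in a block `{3k-2, 3k-1}` (`1 ≤ k`), with `0`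
added to the first block `{1, 2}`: the triangle `0, 1, 2` given by the chord. Two surviving vertices
are adjacent exactly when they are distinct and in the same block, because every edge of `C̃_n`
between different blocks has a deleted end (vertex `0` survives only when its other neighbour
`n - 1` is deleted). A graph whose adjacency is "distinct with the same label" has the label
classes as components, each a clique, so the components are the `⌈(n-1)/3⌉` nonempty blocks. -/

/-- `C̃_n`: the cycle on `{0,…,n-1}` with the additional chord `0 ~ 2`. -/
def cycleTilde (n : ℕ) : SimpleGraph (Fin n) :=
  SimpleGraph.fromRel (fun i j =>
    (j : ℕ) = (i : ℕ) + 1 ∨ ((i : ℕ) = n - 1 ∧ (j : ℕ) = 0) ∨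
    ((i : ℕ) = 0 ∧ (j : ℕ) = 2))

namespace SimpleGraph

section SameLabel

variable {V α : Type*} {G : SimpleGraph V} {f : V → α}

theorem reachable_iff_eq_of_adj_iff (hG : ∀ u v, G.Adj u v ↔ u ≠ v ∧ f u = f v) {u v : V} :
    G.Reachable u v ↔ f u = f v := by
  refine ⟨fun h => ?_, fun h => ?_⟩
  · obtain ⟨p⟩ := h
    induction p with
    | nil => rfl
    | cons hadj _ ih => exact ((hG _ _).1 hadj).2.trans ih
  · by_cases huv : u = v
    · exact huv ▸ Reachable.refl u
    · exact ((hG u v).2 ⟨huv, h⟩).reachable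

theorem setOf_connectedComponentMk_eq_of_adj_iff (hG : ∀ u v, G.Adj u v ↔ u ≠ v ∧ f u = f v)
    (v : V) : {w | G.connectedComponentMk w = G.connectedComponentMk v} = {w | f w = f v} :=
  Set.ext fun _ => ConnectedComponent.eq.trans (reachable_iff_eq_of_adj_iff hG)

theorem isClique_connectedComponent_of_adj_iff (hG : ∀ u v, G.Adj u v ↔ u ≠ v ∧ f u = f v)
    (c : G.ConnectedComponent) : G.IsClique {w | G.connectedComponentMk w = c} := by
  rintro u rfl v hv huv
  exact (hG u v).2 ⟨huv, (reachable_iff_eq_of_adj_iff hG).1 (ConnectedComponent.eq.1 hv.symm)⟩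

theorem natCard_connectedComponent_of_adj_iff (hG : ∀ u v, G.Adj u v ↔ u ≠ v ∧ f u = f v) :
    Nat.card G.ConnectedComponent = Nat.card (Set.range f) := by
  let label : G.ConnectedComponent → Set.range f :=
    ConnectedComponent.lift (fun v => ⟨f v, v, rfl⟩) fun u v p _ =>
      Subtype.ext ((reachable_iff_eq_of_adj_iff hG).1 p.reachable)
  refine Nat.card_eq_of_bijective label
    ⟨fun c d hcd => ?_, fun ⟨_, v, hv⟩ => ⟨G.connectedComponentMk v, Subtype.ext hv⟩⟩
  induction c using ConnectedComponent.ind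
  induction d using ConnectedComponent.ind
  exact ConnectedComponent.eq.2 ((reachable_iff_eq_of_adj_iff hG).2 (congrArg Subtype.val hcd))

end SameLabel

end SimpleGraph

namespace cycleTilde

abbrev survivors (n : ℕ) : Set (Fin n) :=
  {v : Fin n | ¬ ((3 ≤ (v : ℕ) ∧ 3 ∣ (v : ℕ)) ∨ (¬ (3 ∣ (n - 1)) ∧ (v : ℕ) = 0))}

def block {n : ℕ} (v : survivors n) : ℕ :=
  if ((v : Fin n) : ℕ) = 0 then 1 else (((v : Fin n) : ℕ) + 2) / 3

theorem mem_survivors_iff {n : ℕ} (v : Fin n) :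
    v ∈ survivors n ↔ ((v : ℕ) < 3 ∨ ¬ 3 ∣ (v : ℕ)) ∧ (3 ∣ (n - 1) ∨ (v : ℕ) ≠ 0) := by
  simp only [Set.mem_ofPred_eq]
  omega

theorem induce_survivors_adj_iff {n : ℕ} (u v : survivors n) :
    ((cycleTilde n).induce (survivors n)).Adj u v ↔ u ≠ v ∧ block u = block v := by
  have hu := (mem_survivors_iff _).1 u.2
  have hv := (mem_survivors_iff _).1 v.2
  have hun := (u : Fin n).isLt
  have hvn := (v : Fin n).isLt
  simp only [SimpleGraph.induce, cycleTilde, SimpleGraph.comap_adj, SimpleGraph.fromRel_adj,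
    Function.Embedding.coe_subtype, ne_eq, ← Subtype.val_inj, ← Fin.val_eq_val, block]
  split_ifs <;> omega

theorem range_block {n : ℕ} (hn : 2 ≤ n) :
    Set.range (block (n := n)) = Set.Icc 1 ((n + 1) / 3) := by
  ext k
  constructor
  · rintro ⟨v, rfl⟩
    have hv := (mem_survivors_iff _).1 v.2
    have hvn := (v : Fin n).isLt
    simp only [block, Set.mem_Icc]
    split_ifs <;> omega
  · rintro ⟨hk1, hk⟩
    refine ⟨⟨⟨3 * k - 2, by omega⟩, by simp only [Set.mem_ofPred_eq]; omega⟩, ?_⟩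
    simp only [block]
    split_ifs <;> omega

theorem ncard_setOf_block_eq_le_three {n : ℕ} (b : ℕ) :
    {v : survivors n | block v = b}.ncard ≤ 3 := by
  refine (Set.ncard_le_ncard_of_injOn (t := Set.Iio 3)
    (fun v : survivors n => ((v : Fin n) : ℕ) % 3)
    (fun v _ => Nat.mod_lt _ three_pos) (fun u hu v hv huv => ?_)).trans (Set.ncard_Iio_nat 3).le
  have hu_mem := (mem_survivors_iff _).1 u.2
  have hv_mem := (mem_survivors_iff _).1 v.2
  simp only [Set.mem_ofPred_eq, block] at hu hv huv
  refine Subtype.ext (Fin.ext ?_)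
  split_ifs at hu hv <;> omega

end cycleTilde

/-- For `n ≥ 6`, deleting from `C̃_n` the vertices of `{3,…,n-1}` divisible by 3
(together with `0` if `3 ∤ n-1`) leaves exactly `⌈(n-1)/3⌉` connected components,
each of which is a clique of size at most 3. -/
theorem stmt6 (n : ℕ) (hn : 6 ≤ n) :
    Nat.card ((cycleTilde n).induce
        {v : Fin n | ¬ ((3 ≤ (v : ℕ) ∧ 3 ∣ (v : ℕ)) ∨ (¬ (3 ∣ (n - 1)) ∧ (v : ℕ) = 0))}).ConnectedComponent
      = (n - 1 + 2) / 3 ∧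
    ∀ c : ((cycleTilde n).induce
        {v : Fin n | ¬ ((3 ≤ (v : ℕ) ∧ 3 ∣ (v : ℕ)) ∨ (¬ (3 ∣ (n - 1)) ∧ (v : ℕ) = 0))}).ConnectedComponent,
      ((cycleTilde n).induce
        {v : Fin n | ¬ ((3 ≤ (v : ℕ) ∧ 3 ∣ (v : ℕ)) ∨ (¬ (3 ∣ (n - 1)) ∧ (v : ℕ) = 0))}).IsClique
        {w | ((cycleTilde n).induce
          {v : Fin n | ¬ ((3 ≤ (v : ℕ) ∧ 3 ∣ (v : ℕ)) ∨ (¬ (3 ∣ (n - 1)) ∧ (v : ℕ) = 0))}).connectedComponentMk w = c} ∧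
      {w | ((cycleTilde n).induce
          {v : Fin n | ¬ ((3 ≤ (v : ℕ) ∧ 3 ∣ (v : ℕ)) ∨ (¬ (3 ∣ (n - 1)) ∧ (v : ℕ) = 0))}).connectedComponentMk w = c}.ncard ≤ 3 := by
  have hadj := cycleTilde.induce_survivors_adj_iff (n := n)
  refine ⟨?_, fun c => ⟨SimpleGraph.isClique_connectedComponent_of_adj_iff hadj c, ?_⟩⟩
  · rw [SimpleGraph.natCard_connectedComponent_of_adj_iff hadj,
      cycleTilde.range_block (by omega), Nat.card_coe_set_eq, Set.ncard_Icc_nat]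
    omega
  · induction c using SimpleGraph.ConnectedComponent.ind with | h v =>
    rw [SimpleGraph.setOf_connectedComponentMk_eq_of_adj_iff hadj]
    exact cycleTilde.ncard_setOf_block_eq_le_three _
end

section
/- Let n ≥ 5, c and d be integers with c ≤ ⌈n/2⌉ − 1 and d ≥ ⌈(n−1)/3⌉, and let p be a real with 1/⌈(n−1)/3⌉ ≤ p < 1/2. Suppose g > 0 and x ≥ 0 are reals with x ≤ g/(1−p) satisfying (p−g)/p + x(1−p)/p ≤ d·x + (c−d)·g/(1−p). Then g ≥ (1−p)/c. -/
/-!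
Write `y = g/(1-p)`. Multiplying the hypothesis by `p` and regrouping gives
`p ≤ p·c·y + (d·p - (1-p))·(x - y)`. The choice of `p` and `d` makes `d·p ≥ 1 > 1 - p`,
and `x ≤ y`, so the last term is nonpositive; hence `c·y ≥ 1`, i.e. `g ≥ (1-p)/c`.
-/

theorem one_le_mul_of_one_div_le {α : Type*} [Field α] [LinearOrder α] [IsStrictOrderedRing α]
    {m d p : α} (hm : 0 < m) (hp : 1 / m ≤ p) (hmd : m ≤ d) : 1 ≤ d * p := by
  have hp0 : 0 ≤ p := (one_div_pos.mpr hm).le.trans hp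
  calc 1 ≤ m * p := by rwa [div_le_iff₀ hm, mul_comm] at hp
    _ ≤ d * p := mul_le_mul_of_nonneg_right hmd hp0

theorem one_le_mul_div_of_weight_le {p c d g x : ℝ} (hp0 : 0 < p) (hp1 : p < 1)
    (hdp : 1 ≤ d * p) (hx : x ≤ g / (1 - p))
    (hineq : (p - g) / p + x * (1 - p) / p ≤ d * x + (c - d) * g / (1 - p)) :
    1 ≤ c * (g / (1 - p)) := by
  rw [mul_div_assoc (c - d)] at hineq
  set y := g / (1 - p)
  have hg : g = y * (1 - p) := (div_mul_cancel₀ g (sub_pos.mpr hp1).ne').symm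
  have hcleared : p - g + x * (1 - p) ≤ (d * x + (c - d) * y) * p := by
    rw [← div_le_iff₀ hp0, add_div]
    exact hineq
  have hslack : (d * p - (1 - p)) * (x - y) ≤ 0 :=
    mul_nonpos_of_nonneg_of_nonpos (by linarith) (by linarith)
  have hpcy : 1 * p ≤ (c * y) * p := by
    rw [hg] at hcleared
    linarith
  exact le_of_mul_le_mul_right hpcy hp0

theorem stmt13_general (n : ℕ) (hn : 5 ≤ n) (c d : ℤ)
    (hd : ((n - 1 + 2) / 3 : ℕ) ≤ d)
    (p g x : ℝ) (hp1 : 1 / (((n - 1 + 2) / 3 : ℕ) : ℝ) ≤ p) (hp2 : p < 1/2)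
    (hg : 0 < g) (hx : x ≤ g / (1 - p))
    (hineq : (p - g) / p + x * (1 - p) / p ≤ (d : ℝ) * x + ((c : ℝ) - (d : ℝ)) * g / (1 - p)) :
    g ≥ (1 - p) / (c : ℝ) := by
  have hm : (0 : ℝ) < (((n - 1 + 2) / 3 : ℕ) : ℝ) := by
    exact_mod_cast (by omega : 0 < (n - 1 + 2) / 3)
  have hmd : (((n - 1 + 2) / 3 : ℕ) : ℝ) ≤ d := by
    rw [← Int.cast_natCast]
    exact_mod_cast hd
  have hp0 : 0 < p := (one_div_pos.mpr hm).trans_le hp1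
  have h1p : 0 < 1 - p := by linarith
  have hcy := one_le_mul_div_of_weight_le hp0 (by linarith) (one_le_mul_of_one_div_le hm hp1 hmd)
    hx hineq
  have hc : (0 : ℝ) < c := pos_of_mul_pos_left (one_pos.trans_le hcy) (by positivity)
  rw [ge_iff_le, div_le_iff₀ hc]
  calc 1 - p ≤ c * (g / (1 - p)) * (1 - p) := le_mul_of_one_le_left h1p.le hcy
    _ = g * c := by rw [mul_assoc, div_mul_cancel₀ g h1p.ne', mul_comm]

/-- Final inequality manipulation for `Forb(P_n)`: with `n ≥ 5`,
`c ≤ ⌈n/2⌉ - 1`, `d ≥ ⌈(n-1)/3⌉`, `1/⌈(n-1)/3⌉ ≤ p < 1/2`, `g > 0`,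
`0 ≤ x ≤ g/(1-p)`, the inequality
`(p-g)/p + x(1-p)/p ≤ d·x + (c-d)·g/(1-p)` implies `g ≥ (1-p)/c`.
(Here `⌈n/2⌉ = (n+1)/2` and `⌈(n-1)/3⌉ = (n-1+2)/3` as naturals.) -/
theorem stmt13 (n : ℕ) (hn : 5 ≤ n) (c d : ℤ)
    (hc : c ≤ ((n + 1) / 2 : ℕ) - 1) (hd : ((n - 1 + 2) / 3 : ℕ) ≤ d)
    (p g x : ℝ) (hp1 : 1 / (((n - 1 + 2) / 3 : ℕ) : ℝ) ≤ p) (hp2 : p < 1/2)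
    (hg : 0 < g) (hx0 : 0 ≤ x) (hx : x ≤ g / (1 - p))
    (hineq : (p - g) / p + x * (1 - p) / p ≤ (d : ℝ) * x + ((c : ℝ) - (d : ℝ)) * g / (1 - p)) :
    g ≥ (1 - p) / (c : ℝ) :=
  stmt13_general n hn c d hd p g x hp1 hp2 hg hx hineq
end

section
/- For all real p with 0 ≤ p ≤ 1 and every integer k ≥ 2, the function p ↦ p(1−p)/(1+(k−2)p) is concave on [0,1], and for every integer m ≥ 1 the function p ↦ min{p/2, p(1−p)/(1+(k−2)p), (1−p)/m} is continuous and concave on [0,1]. -/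
open Set

lemma concaveOn_mul_one_sub_div {c : ℝ} (hc : 0 ≤ c) :
    ConcaveOn ℝ (Ici 0) fun p : ℝ => p * (1 - p) / (1 + c * p) := by
  refine ⟨convex_Ici 0, fun x (hx : 0 ≤ x) y (hy : 0 ≤ y) a b ha hb hab => ?_⟩
  simp only [smul_eq_mul]
  have hx' : 0 < 1 + c * x := by positivity
  have hy' : 0 < 1 + c * y := by positivity
  have hxy : 0 < 1 + c * (a * x + b * y) := by positivity
  rw [← mul_div_assoc, ← mul_div_assoc, div_add_div _ _ hx'.ne' hy'.ne',
    div_le_div_iff₀ (by positivity) hxy]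
  obtain rfl : b = 1 - a := by linarith
  -- the two sides differ by exactly `(1 + c) a (1 - a) (x - y) ^ 2`
  linear_combination mul_nonneg (mul_nonneg (mul_nonneg (by linarith : 0 ≤ 1 + c) ha) hb)
    (sq_nonneg (x - y))

lemma concaveOn_mul_add {s : Set ℝ} (hs : Convex ℝ s) (a b : ℝ) :
    ConcaveOn ℝ s fun p : ℝ => a * p + b :=
  ((LinearMap.mulLeft ℝ a).concaveOn hs).add_const b

theorem stmt16_general (k m : ℕ) (hk : 2 ≤ k) :
    ConcaveOn ℝ (Set.Icc (0:ℝ) 1)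
      (fun p : ℝ => p * (1 - p) / (1 + ((k : ℝ) - 2) * p)) ∧
    ContinuousOn
      (fun p : ℝ => min (min (p / 2) (p * (1 - p) / (1 + ((k : ℝ) - 2) * p)))
        ((1 - p) / (m : ℝ))) (Set.Icc (0:ℝ) 1) ∧
    ConcaveOn ℝ (Set.Icc (0:ℝ) 1)
      (fun p : ℝ => min (min (p / 2) (p * (1 - p) / (1 + ((k : ℝ) - 2) * p)))
        ((1 - p) / (m : ℝ))) := by
  have hc : (0 : ℝ) ≤ k - 2 := by
    rw [sub_nonneg]
    exact_mod_cast hk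
  have hmiddle := (concaveOn_mul_one_sub_div hc).subset Icc_subset_Ici_self (convex_Icc 0 1)
  have hhalf : ConcaveOn ℝ (Icc 0 1) fun p : ℝ => p / 2 := by
    convert concaveOn_mul_add (convex_Icc 0 1) (1 / 2) 0 using 1
    ext p; ring
  have hright : ConcaveOn ℝ (Icc 0 1) fun p : ℝ => (1 - p) / m := by
    convert concaveOn_mul_add (convex_Icc 0 1) (-1 / m) (1 / m) using 1
    ext p; ring
  have hden : ∀ p ∈ Icc (0 : ℝ) 1, 1 + ((k : ℝ) - 2) * p ≠ 0 := fun p hp =>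
    (add_pos_of_pos_of_nonneg one_pos (mul_nonneg hc hp.1)).ne'
  have hmiddle_cont : ContinuousOn (fun p : ℝ => p * (1 - p) / (1 + ((k : ℝ) - 2) * p))
      (Icc 0 1) :=
    ContinuousOn.div (by fun_prop) (by fun_prop) hden
  exact ⟨hmiddle, by fun_prop, (hhalf.inf hmiddle).inf hright⟩

/-- For an integer `k ≥ 2` the function `p ↦ p(1-p)/(1+(k-2)p)` is concave on
`[0,1]`, and for any integer `m ≥ 1` the pointwise minimum
`p ↦ min{p/2, p(1-p)/(1+(k-2)p), (1-p)/m}` is continuous and concave on `[0,1]`. -/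
theorem stmt16 (k m : ℕ) (hk : 2 ≤ k) (hm : 1 ≤ m) :
    ConcaveOn ℝ (Set.Icc (0:ℝ) 1)
      (fun p : ℝ => p * (1 - p) / (1 + ((k : ℝ) - 2) * p)) ∧
    ContinuousOn
      (fun p : ℝ => min (min (p / 2) (p * (1 - p) / (1 + ((k : ℝ) - 2) * p)))
        ((1 - p) / (m : ℝ))) (Set.Icc (0:ℝ) 1) ∧
    ConcaveOn ℝ (Set.Icc (0:ℝ) 1)
      (fun p : ℝ => min (min (p / 2) (p * (1 - p) / (1 + ((k : ℝ) - 2) * p)))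
        ((1 - p) / (m : ℝ))) :=
  stmt16_general k m hk
end
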